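/- arXiv:2405.18603 — 6 statements merged into one kernel-verified Lean document; each statement's English description precedes it below -/
import Mathlib

section
/- Let n ≥ 2, m = √(2/(n(n−1))), and let λ₁,…,λₙ be real numbers with λ_i > −m for all i. Set μ_i = (λ_i + m)^{-1} > 0. Then σ₂(λ) = 1 if and only if σ_{n−1}(μ)/σ_{n−2}(μ) = 1/((n−1)m), where σ_k denotes the k-th elementary symmetric polynomial. -/
/-!
Put `y_i = μ_i⁻¹ = λ_i + m > 0`. Shifting every variable by `-m` gives
`σ₂(λ) = σ₂(y) - (n-1) m σ₁(y) + n(n-1)m²/2`, and the choice of `m` makes the last term `1`;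
so `σ₂(λ) = 1` iff `σ₂(y) = (n-1) m σ₁(y)`. On the other side, passing to complementary index sets
gives `σ_{n-k}(y⁻¹) = σ_k(y) / ∏ y`, so `σ_{n-1}(μ)/σ_{n-2}(μ) = σ₁(y)/σ₂(y)`.
-/

open scoped Real
open Real

/-- The `k`-th elementary symmetric polynomial in `n` variables. -/
noncomputable def esymm (n k : ℕ) (x : Fin n → ℝ) : ℝ :=
  ∑ s ∈ Finset.powersetCard k Finset.univ, ∏ i ∈ s, x i

lemma esymm_eq_eval {n : ℕ} (k : ℕ) (x : Fin n → ℝ) :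
    esymm n k x = MvPolynomial.eval x (MvPolynomial.esymm (Fin n) ℝ k) := by
  simp [esymm, MvPolynomial.esymm]

lemma esymm_one {n : ℕ} (x : Fin n → ℝ) : esymm n 1 x = ∑ i, x i := by
  simp [esymm, Finset.powersetCard_one]

lemma esymm_pos {n k : ℕ} (hk : k ≤ n) {x : Fin n → ℝ} (hx : ∀ i, 0 < x i) :
    0 < esymm n k x :=
  Finset.sum_pos (fun s _ => Finset.prod_pos fun i _ => hx i)
    (Finset.powersetCard_nonempty.2 (by simpa using hk))

lemma two_mul_esymm_two {n : ℕ} (x : Fin n → ℝ) :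
    2 * esymm n 2 x = (∑ i, x i) ^ 2 - ∑ i, x i ^ 2 := by
  have hanti : (Finset.HasAntidiagonal.antidiagonal 2).filter (fun a : ℕ × ℕ => a.1 < 2)
      = {(0, 2), (1, 1)} := by decide
  have h := congrArg (MvPolynomial.eval x) (MvPolynomial.mul_esymm_eq_sum (Fin n) ℝ 2)
  simp only [hanti, Nat.cast_ofNat, map_mul, MvPolynomial.eval_ofNat, ← esymm_eq_eval,
    MvPolynomial.psum, Finset.mem_singleton, Prod.mk.injEq, zero_ne_one, OfNat.ofNat_ne_one,
    and_self, not_false_eq_true, Finset.sum_insert, pow_zero, MvPolynomial.esymm_zero, mul_one,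
    one_mul, Finset.sum_singleton, pow_one, MvPolynomial.esymm_one, neg_mul, map_pow, map_neg,
    map_one, map_add, map_sum, MvPolynomial.eval_X] at h
  linear_combination h

lemma esymm_two_sub_const {n : ℕ} (x : Fin n → ℝ) (c : ℝ) :
    esymm n 2 (fun i => x i - c)
      = esymm n 2 x - (n - 1) * c * esymm n 1 x + n * (n - 1) / 2 * c ^ 2 := by
  have hsum : ∑ i, (x i - c) = ∑ i, x i - n * c := by simp [Finset.sum_sub_distrib]
  have hsq : ∑ i, (x i - c) ^ 2 = ∑ i, x i ^ 2 - 2 * c * ∑ i, x i + n * c ^ 2 := by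
    simp only [sub_sq', Finset.sum_add_distrib, Finset.sum_sub_distrib, ← Finset.sum_mul,
      ← Finset.mul_sum, Finset.sum_const, Finset.card_univ, Fintype.card_fin, nsmul_eq_mul]
    ring
  have h := two_mul_esymm_two (fun i => x i - c)
  rw [hsum, hsq] at h
  rw [esymm_one]
  linear_combination (h - two_mul_esymm_two x) / 2

lemma esymm_inv_compl {n k : ℕ} (hk : k ≤ n) {y : Fin n → ℝ} (hy : ∀ i, y i ≠ 0) :
    esymm n (n - k) (fun i => (y i)⁻¹) = (∏ i, y i)⁻¹ * esymm n k y := by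
  unfold esymm
  rw [Finset.mul_sum]
  refine Finset.sum_nbij' (fun s => sᶜ) (fun s => sᶜ) ?_ ?_ (fun s _ => compl_compl s)
    (fun s _ => compl_compl s) ?_
  · intro s hs
    simp only [Finset.mem_powersetCard_univ, Finset.card_compl, Fintype.card_fin] at hs ⊢
    omega
  · intro s hs
    simp only [Finset.mem_powersetCard_univ, Finset.card_compl, Fintype.card_fin] at hs ⊢
    omega
  · intro s _
    have hsc : ∏ i ∈ sᶜ, y i ≠ 0 := Finset.prod_ne_zero_iff.2 fun i _ => hy i
    rw [Finset.prod_inv_distrib, ← Finset.prod_mul_prod_compl s y, mul_inv, mul_assoc,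
      inv_mul_cancel₀ hsc, mul_one]

lemma esymm_inv_ratio {n : ℕ} (hn : 2 ≤ n) {y : Fin n → ℝ} (hy : ∀ i, y i ≠ 0) :
    esymm n (n - 1) (fun i => (y i)⁻¹) / esymm n (n - 2) (fun i => (y i)⁻¹)
      = esymm n 1 y / esymm n 2 y := by
  have hprod : (∏ i, y i)⁻¹ ≠ 0 := inv_ne_zero (Finset.prod_ne_zero_iff.2 fun i _ => hy i)
  rw [esymm_inv_compl (by omega) hy, esymm_inv_compl hn hy, mul_div_mul_left _ _ hprod]

/-- Legendre–Lewy identity: with `m = √(2/(n(n−1)))`, `λ_i > −m` and `μ_i = (λ_i + m)⁻¹`,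
one has `σ₂(λ) = 1 ↔ σ_{n−1}(μ)/σ_{n−2}(μ) = 1/((n−1)m)`. -/
theorem sigma2_iff_Lambda {n : ℕ} (hn : 2 ≤ n) (m : ℝ)
    (hm : m = Real.sqrt (2 / (n * (n - 1))))
    (lam mu : Fin n → ℝ) (hlam : ∀ i, -m < lam i)
    (hmu : ∀ i, mu i = (lam i + m)⁻¹) :
    esymm n 2 lam = 1 ↔
      esymm n (n - 1) mu / esymm n (n - 2) mu = 1 / ((n - 1) * m) := by
  have hn1 : (0 : ℝ) < n - 1 := by
    have : (2 : ℝ) ≤ n := by exact_mod_cast hn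
    linarith
  have hm_pos : 0 < m := hm ▸ Real.sqrt_pos.2 (by positivity)
  have hm_sq : n * (n - 1) / 2 * m ^ 2 = 1 := by
    rw [hm, Real.sq_sqrt (by positivity)]
    field_simp
  obtain ⟨y, hy, rfl, rfl⟩ : ∃ y : Fin n → ℝ,
      (∀ i, 0 < y i) ∧ lam = (fun i => y i - m) ∧ mu = fun i => (y i)⁻¹ :=
    ⟨fun i => lam i + m, fun i => by linarith [hlam i], funext fun i => by ring, funext hmu⟩
  rw [esymm_two_sub_const, hm_sq, esymm_inv_ratio hn fun i => (hy i).ne',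
    div_eq_div_iff (esymm_pos hn hy).ne' (by positivity)]
  constructor <;> intro h <;> linarith
end

section
/- The function Λ(μ) = σ_{n−1}(μ)/σ_{n−2}(μ) is concave on the positive cone {μ ∈ ℝⁿ : μ_i > 0 for all i}, and its gradient ∇Λ(μ) has all components strictly positive there. -/
open scoped Real
open Real

namespace MLaux

open Finset

variable {n : ℕ}

lemma sum_powersetCard_two {ι : Type*} [DecidableEq ι] (s : Finset ι) (w : ι → ℝ) :
    2 * ∑ T ∈ s.powersetCard 2, ∏ i ∈ T, w i
      = (∑ i ∈ s, w i) ^ 2 - ∑ i ∈ s, (w i) ^ 2 := by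
  induction s using Finset.induction with
  | empty =>
      rw [Finset.powersetCard_eq_empty.2 (by simp)]
      simp
  | @insert a s ha ih =>
      rw [show (2:ℕ) = 1 + 1 from rfl, Finset.powersetCard_succ_insert ha,
        Finset.sum_union, Finset.sum_image]
      · have h1 : ∑ T ∈ s.powersetCard 1, ∏ i ∈ insert a T, w i
            = w a * ∑ i ∈ s, w i := by
          rw [Finset.mul_sum]
          rw [Finset.powersetCard_one, Finset.sum_map]
          refine Finset.sum_congr rfl fun i hi => ?_
          have hai : a ≠ i := fun h => ha (h ▸ hi)
          simp [Function.Embedding.coeFn_mk, Finset.prod_insert, hai]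
        rw [h1, Finset.sum_insert ha, Finset.sum_insert ha]
        norm_num
        linear_combination ih
      · intro T1 h1 T2 h2 heq
        have hT1 : a ∉ T1 := fun h => ha ((Finset.mem_powersetCard.1 h1).1 h)
        have hT2 : a ∉ T2 := fun h => ha ((Finset.mem_powersetCard.1 h2).1 h)
        have := congrArg (fun T => Finset.erase T a) heq
        simpa [Finset.erase_insert, hT1, hT2] using this
      · rw [Finset.disjoint_left]
        intro T hT hT2
        have hTs : T ⊆ s := (Finset.mem_powersetCard.1 hT).1
        obtain ⟨T', hT', rfl⟩ := Finset.mem_image.1 hT2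
        exact ha (hTs (Finset.mem_insert_self a T'))


lemma esymm_compl (n k : ℕ) (hk : k ≤ n) (x : Fin n → ℝ) :
    esymm n (n - k) x = ∑ T ∈ Finset.powersetCard k (Finset.univ : Finset (Fin n)),
      ∏ i ∈ Tᶜ, x i := by
  unfold esymm
  refine Finset.sum_nbij' (fun T => Tᶜ) (fun T => Tᶜ) ?_ ?_ ?_ ?_ ?_
  · intro T hT
    rw [Finset.mem_powersetCard_univ] at hT ⊢
    rw [Finset.card_compl, hT, Fintype.card_fin]
    omega
  · intro T hT
    rw [Finset.mem_powersetCard_univ] at hT ⊢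
    rw [Finset.card_compl, hT, Fintype.card_fin]
  · intro T _; exact compl_compl T
  · intro T _; exact compl_compl T
  · intro T _; rw [compl_compl]

lemma esymm_top_one (n : ℕ) (hn : 1 ≤ n) (x : Fin n → ℝ) (hx : ∀ i, x i ≠ 0) :
    esymm n (n - 1) x = (∏ i, x i) * ∑ i, (x i)⁻¹ := by
  rw [esymm_compl n 1 hn x, Finset.powersetCard_one, Finset.sum_map, Finset.mul_sum]
  refine Finset.sum_congr rfl fun i _ => ?_
  have : ({i} : Finset (Fin n))ᶜ = Finset.univ.erase i := Finset.compl_singleton i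
  rw [Function.Embedding.coeFn_mk] at *
  rw [this]
  have h := Finset.prod_erase_mul Finset.univ x (Finset.mem_univ i)
  field_simp [hx i]
  linarith [h]

lemma esymm_top_two (n : ℕ) (hn : 2 ≤ n) (x : Fin n → ℝ) (hx : ∀ i, x i ≠ 0) :
    esymm n (n - 2) x = (∏ i, x i) *
      (((∑ i, (x i)⁻¹) ^ 2 - ∑ i, ((x i)⁻¹) ^ 2) / 2) := by
  rw [esymm_compl n 2 hn x]
  have key : ∀ T ∈ Finset.powersetCard 2 (Finset.univ : Finset (Fin n)),
      ∏ i ∈ Tᶜ, x i = (∏ i, x i) * ∏ i ∈ T, (x i)⁻¹ := by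
    intro T _
    have h := Finset.prod_mul_prod_compl T x
    have hT : (∏ i ∈ T, x i) ≠ 0 := Finset.prod_ne_zero_iff.2 fun i _ => hx i
    rw [Finset.prod_inv_distrib]
    field_simp
    linarith [h]
  rw [Finset.sum_congr rfl key, ← Finset.mul_sum]
  congr 1
  have := sum_powersetCard_two (Finset.univ : Finset (Fin n)) (fun i => (x i)⁻¹)
  linarith [this]

noncomputable def sig1 (n : ℕ) (w : Fin n → ℝ) : ℝ := ∑ i, w i
noncomputable def sig2 (n : ℕ) (w : Fin n → ℝ) : ℝ := ∑ i, (w i) ^ 2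
noncomputable def Gf (n : ℕ) (w : Fin n → ℝ) : ℝ := (sig1 n w ^ 2 - sig2 n w) / sig1 n w
noncomputable def cvec (n : ℕ) (ν : Fin n → ℝ) (i : Fin n) : ℝ :=
  ∑ j, (ν j - if j = i then 1 else 0) ^ 2

lemma cvec_nonneg (ν : Fin n → ℝ) (i : Fin n) : 0 ≤ cvec n ν i :=
  Finset.sum_nonneg fun j _ => sq_nonneg _

lemma cvec_eq (ν : Fin n → ℝ) (i : Fin n) :
    cvec n ν i = (∑ j, (ν j) ^ 2) - 2 * ν i + 1 := by
  unfold cvec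
  have h : ∀ j : Fin n, (ν j - if j = i then 1 else 0) ^ 2
      = (ν j) ^ 2 + (if j = i then 1 - 2 * ν j else 0) := by
    intro j; by_cases h : j = i <;> simp [h] <;> ring
  rw [Finset.sum_congr rfl fun j _ => h j, Finset.sum_add_distrib,
    Finset.sum_ite_eq' Finset.univ i (fun j => 1 - 2 * ν j)]
  simp; ring

lemma sig1_pos (hn : 0 < n) (w : Fin n → ℝ) (hw : ∀ i, 0 < w i) : 0 < sig1 n w := by
  have : Nonempty (Fin n) := ⟨⟨0, hn⟩⟩
  exact Finset.sum_pos (fun i _ => hw i) Finset.univ_nonempty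

lemma sig_sub_pos (hn : 2 ≤ n) (w : Fin n → ℝ) (hw : ∀ i, 0 < w i) :
    0 < sig1 n w ^ 2 - sig2 n w := by
  have key : sig1 n w ^ 2 - sig2 n w = ∑ i, w i * (sig1 n w - w i) := by
    have : ∀ i : Fin n, w i * (sig1 n w - w i) = w i * sig1 n w - (w i) ^ 2 := by
      intro i; ring
    rw [Finset.sum_congr rfl fun i _ => this i, Finset.sum_sub_distrib,
      ← Finset.sum_mul]
    unfold sig1 sig2; ring
  rw [key]
  refine Finset.sum_pos (fun i _ => mul_pos (hw i) ?_) ?_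
  · have herase : ∑ j ∈ Finset.univ.erase i, w j + w i = sig1 n w :=
      Finset.sum_erase_add Finset.univ w (Finset.mem_univ i)
    have hne : (Finset.univ.erase i).Nonempty := by
      rw [← Finset.card_pos, Finset.card_erase_of_mem (Finset.mem_univ i),
        Finset.card_univ, Fintype.card_fin]
      omega
    have hpos : 0 < ∑ j ∈ Finset.univ.erase i, w j :=
      Finset.sum_pos (fun j _ => hw j) hne
    linarith
  · have : Nonempty (Fin n) := ⟨⟨0, by omega⟩⟩
    exact Finset.univ_nonempty

lemma Gf_pos (hn : 2 ≤ n) (w : Fin n → ℝ) (hw : ∀ i, 0 < w i) : 0 < Gf n w :=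
  div_pos (sig_sub_pos hn w hw) (sig1_pos (by omega) w hw)

lemma sum_c_mul (ν w : Fin n → ℝ) :
    (∑ i, cvec n ν i * w i) * sig1 n w - (sig1 n w ^ 2 - sig2 n w)
      = ∑ i, (sig1 n w * ν i - w i) ^ 2 := by
  have e1 : ∑ i, cvec n ν i * w i
      = (∑ j, (ν j) ^ 2) * sig1 n w - 2 * (∑ i, ν i * w i) + sig1 n w := by
    have h : ∀ i : Fin n, cvec n ν i * w i
        = (∑ j, (ν j) ^ 2) * w i - 2 * (ν i * w i) + w i := by
      intro i; rw [cvec_eq]; ring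
    rw [Finset.sum_congr rfl fun i _ => h i, Finset.sum_add_distrib,
      Finset.sum_sub_distrib, ← Finset.mul_sum, ← Finset.mul_sum]
    unfold sig1; ring
  have e2 : ∑ i, (sig1 n w * ν i - w i) ^ 2
      = sig1 n w ^ 2 * (∑ j, (ν j) ^ 2) - 2 * sig1 n w * (∑ i, ν i * w i)
        + sig2 n w := by
    have h : ∀ i : Fin n, (sig1 n w * ν i - w i) ^ 2
        = sig1 n w ^ 2 * (ν i) ^ 2 - 2 * sig1 n w * (ν i * w i) + (w i) ^ 2 := by
      intro i; ring
    rw [Finset.sum_congr rfl fun i _ => h i, Finset.sum_add_distrib,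
      Finset.sum_sub_distrib, ← Finset.mul_sum, ← Finset.mul_sum]
    unfold sig2; ring
  rw [e1, e2]; ring

lemma lower_bound (hn : 0 < n) (w : Fin n → ℝ) (hw : ∀ i, 0 < w i) (ν : Fin n → ℝ) :
    Gf n w ≤ ∑ i, cvec n ν i * w i := by
  have hs := sig1_pos hn w hw
  rw [Gf, div_le_iff₀ hs]
  have h := sum_c_mul ν w
  have h2 : 0 ≤ ∑ i, (sig1 n w * ν i - w i) ^ 2 :=
    Finset.sum_nonneg fun i _ => sq_nonneg _
  linarith

lemma at_opt (hn : 0 < n) (w : Fin n → ℝ) (hw : ∀ i, 0 < w i) :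
    ∑ i, cvec n (fun j => w j / sig1 n w) i * w i = Gf n w := by
  have hs := sig1_pos hn w hw
  have h := sum_c_mul (n := n) (fun j => w j / sig1 n w) w
  have hz : ∀ i : Fin n, (sig1 n w * (w i / sig1 n w) - w i) ^ 2 = 0 := by
    intro i
    rw [mul_div_cancel₀ _ hs.ne']
    ring
  rw [Finset.sum_congr rfl fun i _ => hz i, Finset.sum_const_zero] at h
  rw [Gf, eq_div_iff hs.ne']
  linarith

lemma cvec_cross (β : ℝ) (lam rho : Fin n → ℝ) (i : Fin n) :
    cvec n (fun j => β * lam j + (1 - β) * rho j) i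
      = β ^ 2 * cvec n lam i
        + 2 * β * (1 - β) * (∑ j, (lam j - if j = i then 1 else 0)
            * (rho j - if j = i then 1 else 0))
        + (1 - β) ^ 2 * cvec n rho i := by
  unfold cvec
  have h : ∀ j : Fin n,
      ((fun j => β * lam j + (1 - β) * rho j) j - if j = i then 1 else 0) ^ 2
        = β ^ 2 * (lam j - if j = i then 1 else 0) ^ 2
          + 2 * β * (1 - β) * ((lam j - if j = i then 1 else 0)
              * (rho j - if j = i then 1 else 0))
          + (1 - β) ^ 2 * (rho j - if j = i then 1 else 0) ^ 2 := by
    intro j; simp only []; ring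
  rw [Finset.sum_congr rfl fun j _ => h j, Finset.sum_add_distrib,
    Finset.sum_add_distrib, ← Finset.mul_sum, ← Finset.mul_sum, ← Finset.mul_sum]

lemma scalar_step (A B m β t r : ℝ) (hA : 0 ≤ A) (hB : 0 ≤ B) (hm : m ≤ A * B)
    (hβ0 : 0 ≤ β) (hβ1 : β ≤ 1) (ht : 0 < t) (hr : 0 < r) :
    (β ^ 2 * A ^ 2 + 2 * β * (1 - β) * m + (1 - β) ^ 2 * B ^ 2) * (t * r / (t + r))
      ≤ β ^ 2 * A ^ 2 * t + (1 - β) ^ 2 * B ^ 2 * r := by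
  rw [← mul_div_assoc, div_le_iff₀ (by linarith)]
  have h2 : 0 ≤ 2 * β * (1 - β) * t * r * (A * B - m) := by
    have : 0 ≤ 2 * β * (1 - β) * t * r :=
      mul_nonneg (mul_nonneg (mul_nonneg (by linarith) (by linarith)) ht.le) hr.le
    nlinarith
  nlinarith [sq_nonneg (β * A * t - (1 - β) * B * r)]

lemma G_harmonic (hn : 2 ≤ n) (t r : Fin n → ℝ) (ht : ∀ i, 0 < t i)
    (hr : ∀ i, 0 < r i) :
    Gf n (fun i => t i * r i / (t i + r i))
      ≤ Gf n t * Gf n r / (Gf n t + Gf n r) := by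
  have hn0 : 0 < n := by omega
  set u : Fin n → ℝ := fun i => t i * r i / (t i + r i) with hu
  have hu_pos : ∀ i, 0 < u i := fun i => by
    have := ht i; have := hr i
    positivity
  have hGt := Gf_pos hn t ht
  have hGr := Gf_pos hn r hr
  set β := Gf n r / (Gf n t + Gf n r) with hβ
  have hβ0 : 0 ≤ β := by positivity
  have hβ1 : β ≤ 1 := by
    rw [hβ, div_le_one (by positivity)]; linarith
  set lam : Fin n → ℝ := fun j => t j / sig1 n t with hlam
  set rho : Fin n → ℝ := fun j => r j / sig1 n r with hrho
  have h1 : Gf n u ≤ ∑ i, cvec n (fun j => β * lam j + (1 - β) * rho j) i * u i :=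
    lower_bound hn0 u hu_pos _
  have h2 : ∀ i : Fin n, cvec n (fun j => β * lam j + (1 - β) * rho j) i * u i
      ≤ β ^ 2 * (cvec n lam i * t i) + (1 - β) ^ 2 * (cvec n rho i * r i) := by
    intro i
    rw [cvec_cross]
    have ha := cvec_nonneg lam i
    have hb := cvec_nonneg rho i
    set m := ∑ j, (lam j - if j = i then 1 else 0) * (rho j - if j = i then 1 else 0)
      with hm
    have hm2 : m ^ 2 ≤ cvec n lam i * cvec n rho i := by
      rw [hm]
      exact Finset.sum_mul_sq_le_sq_mul_sq _ _ _
    have hmle : m ≤ Real.sqrt (cvec n lam i) * Real.sqrt (cvec n rho i) := by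
      have l1 : m ≤ |m| := le_abs_self m
      have l2 : |m| = Real.sqrt (m ^ 2) := (Real.sqrt_sq_eq_abs m).symm
      have l3 : Real.sqrt (m ^ 2) ≤ Real.sqrt (cvec n lam i * cvec n rho i) :=
        Real.sqrt_le_sqrt hm2
      rw [Real.sqrt_mul ha] at l3
      linarith
    have key := scalar_step (Real.sqrt (cvec n lam i)) (Real.sqrt (cvec n rho i))
      m β (t i) (r i) (Real.sqrt_nonneg _) (Real.sqrt_nonneg _) hmle hβ0 hβ1
      (ht i) (hr i)
    rw [Real.sq_sqrt ha, Real.sq_sqrt hb] at key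
    have hui : u i = t i * r i / (t i + r i) := rfl
    rw [hui]
    linarith [key]
  have h3 : ∑ i, cvec n lam i * t i = Gf n t := at_opt hn0 t ht
  have h3' : ∑ i, cvec n rho i * r i = Gf n r := at_opt hn0 r hr
  have h4 := Finset.sum_le_sum fun i (_ : i ∈ Finset.univ) => h2 i
  have h5 : ∑ i, (β ^ 2 * (cvec n lam i * t i) + (1 - β) ^ 2 * (cvec n rho i * r i))
      = β ^ 2 * Gf n t + (1 - β) ^ 2 * Gf n r := by
    rw [Finset.sum_add_distrib, ← Finset.mul_sum, ← Finset.mul_sum, h3, h3']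
  have h6 : β ^ 2 * Gf n t + (1 - β) ^ 2 * Gf n r
      = Gf n t * Gf n r / (Gf n t + Gf n r) := by
    rw [hβ]
    field_simp
    ring
  rw [h5, h6] at h4
  linarith [h1, h4]

noncomputable def Hf (n : ℕ) (x : Fin n → ℝ) : ℝ := 2 / Gf n (fun i => (x i)⁻¹)

lemma Hf_superadd (hn : 2 ≤ n) (x y : Fin n → ℝ) (hx : ∀ i, 0 < x i)
    (hy : ∀ i, 0 < y i) : Hf n x + Hf n y ≤ Hf n (x + y) := by
  set t : Fin n → ℝ := fun i => (x i)⁻¹ with htdef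
  set r : Fin n → ℝ := fun i => (y i)⁻¹ with hrdef
  have ht : ∀ i, 0 < t i := fun i => by simp [htdef]; exact hx i
  have hr : ∀ i, 0 < r i := fun i => by simp [hrdef]; exact hy i
  have hGt := Gf_pos hn t ht
  have hGr := Gf_pos hn r hr
  have hxy : (fun i => ((x + y) i)⁻¹) = fun i => t i * r i / (t i + r i) := by
    funext i
    have h1 := (hx i).ne'
    have h2 := (hy i).ne'
    have h3 : x i + y i ≠ 0 := (add_pos (hx i) (hy i)).ne'
    simp only [Pi.add_apply, htdef, hrdef]
    field_simp
    rw [add_comm (y i) (x i)]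
    exact (div_self h3).symm
  have hGu : Gf n (fun i => ((x + y) i)⁻¹) ≤ Gf n t * Gf n r / (Gf n t + Gf n r) := by
    rw [hxy]
    exact G_harmonic hn t r ht hr
  have hGupos : 0 < Gf n (fun i => ((x + y) i)⁻¹) := by
    refine Gf_pos hn _ fun i => ?_
    simp only [Pi.add_apply]
    exact inv_pos.2 (add_pos (hx i) (hy i))
  have key : 2 / (Gf n t * Gf n r / (Gf n t + Gf n r))
      ≤ 2 / Gf n (fun i => ((x + y) i)⁻¹) := by
    apply div_le_div_of_nonneg_left (by norm_num) hGupos hGu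
  have heq : 2 / (Gf n t * Gf n r / (Gf n t + Gf n r)) = 2 / Gf n t + 2 / Gf n r := by
    field_simp
    ring
  unfold Hf
  rw [← htdef, ← hrdef]
  linarith [key, heq]

lemma Hf_smul (hn : 2 ≤ n) (c : ℝ) (hc : 0 < c) (x : Fin n → ℝ) (hx : ∀ i, 0 < x i) :
    Hf n (c • x) = c * Hf n x := by
  have ht : ∀ i, (0:ℝ) < (x i)⁻¹ := fun i => inv_pos.2 (hx i)
  have hs := sig1_pos (by omega : 0 < n) _ ht
  have hsq := sig_sub_pos hn _ ht
  have hinv : (fun i => ((c • x) i)⁻¹) = fun i => c⁻¹ * (x i)⁻¹ := by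
    funext i
    simp [mul_inv, mul_comm]
  unfold Hf
  rw [hinv]
  have h1 : sig1 n (fun i => c⁻¹ * (x i)⁻¹) = c⁻¹ * sig1 n (fun i => (x i)⁻¹) := by
    unfold sig1; rw [Finset.mul_sum]
  have h2 : sig2 n (fun i => c⁻¹ * (x i)⁻¹) = c⁻¹ ^ 2 * sig2 n (fun i => (x i)⁻¹) := by
    unfold sig2
    rw [Finset.mul_sum]
    exact Finset.sum_congr rfl fun i _ => by ring
  unfold Gf
  rw [h1, h2]
  set S := sig1 n (fun i => (x i)⁻¹)
  set Q := sig2 n (fun i => (x i)⁻¹)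
  have hc' := hc.ne'
  have hS := hs.ne'
  have hQ := hsq.ne'
  field_simp

lemma bridge (hn : 2 ≤ n) (x : Fin n → ℝ) (hx : ∀ i, 0 < x i) :
    esymm n (n - 1) x / esymm n (n - 2) x = Hf n x := by
  have hxne : ∀ i, x i ≠ 0 := fun i => (hx i).ne'
  have ht : ∀ i, (0:ℝ) < (x i)⁻¹ := fun i => inv_pos.2 (hx i)
  have hs := sig1_pos (by omega : 0 < n) _ ht
  have hsq := sig_sub_pos hn _ ht
  have hP : (∏ i, x i) ≠ 0 := Finset.prod_ne_zero_iff.2 fun i _ => hxne i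
  rw [esymm_top_one n (by omega) x hxne, esymm_top_two n hn x hxne,
    mul_div_mul_left _ _ hP]
  unfold Hf Gf
  have h1 : sig1 n (fun i => (x i)⁻¹) = ∑ i, (x i)⁻¹ := rfl
  have h2 : sig2 n (fun i => (x i)⁻¹) = ∑ i, ((x i)⁻¹) ^ 2 := rfl
  rw [h1, h2] at *
  set S := ∑ i, (x i)⁻¹
  set Q := ∑ i, ((x i)⁻¹) ^ 2
  have hs' : 0 < S := hs
  have hsq' : 0 < S ^ 2 - Q := hsq
  rw [div_div_eq_mul_div, div_div_eq_mul_div, mul_comm]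

lemma part1 (hn : 2 ≤ n) :
    ConcaveOn ℝ {μ : Fin n → ℝ | ∀ i, 0 < μ i}
      (fun μ => esymm n (n - 1) μ / esymm n (n - 2) μ) := by
  constructor
  · have hset : {μ : Fin n → ℝ | ∀ i, 0 < μ i}
        = Set.univ.pi (fun _ : Fin n => Set.Ioi (0:ℝ)) := by
      ext μ; simp [Set.mem_pi]
    rw [hset]
    exact convex_pi fun i _ => convex_Ioi 0
  · intro x hx y hy a b ha hb hab
    simp only [Set.mem_setOf_eq] at hx hy
    rcases eq_or_lt_of_le ha with ha0 | ha
    · simp [← ha0, show b = 1 by linarith]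
    rcases eq_or_lt_of_le hb with hb0 | hb
    · simp [← hb0, show a = 1 by linarith]
    have hax : ∀ i, 0 < (a • x) i := fun i => by
      simp only [Pi.smul_apply, smul_eq_mul]; exact mul_pos ha (hx i)
    have hby : ∀ i, 0 < (b • y) i := fun i => by
      simp only [Pi.smul_apply, smul_eq_mul]; exact mul_pos hb (hy i)
    have hsum : ∀ i, 0 < (a • x + b • y) i := fun i => add_pos (hax i) (hby i)
    simp only [smul_eq_mul]
    rw [bridge hn x hx, bridge hn y hy, bridge hn _ hsum]
    calc a * Hf n x + b * Hf n y
        = Hf n (a • x) + Hf n (b • y) := by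
          rw [Hf_smul hn a ha x hx, Hf_smul hn b hb y hy]
      _ ≤ Hf n (a • x + b • y) := Hf_superadd hn _ _ hax hby

noncomputable def Phi (n : ℕ) (ν : Fin n → ℝ) : ℝ :=
  2 * (∑ j, (ν j)⁻¹) * ((∑ j, (ν j)⁻¹) ^ 2 - ∑ j, ((ν j)⁻¹) ^ 2)⁻¹

lemma bridge2 (hn : 2 ≤ n) (x : Fin n → ℝ) (hx : ∀ i, 0 < x i) :
    esymm n (n - 1) x / esymm n (n - 2) x = Phi n x := by
  rw [bridge hn x hx]
  unfold Hf Gf Phi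
  have h1 : sig1 n (fun i => (x i)⁻¹) = ∑ i, (x i)⁻¹ := rfl
  have h2 : sig2 n (fun i => (x i)⁻¹) = ∑ i, ((x i)⁻¹) ^ 2 := rfl
  rw [h1, h2, div_div_eq_mul_div, mul_comm, div_eq_mul_inv]

lemma isOpen_cone : IsOpen {μ : Fin n → ℝ | ∀ i, 0 < μ i} := by
  have hset : {μ : Fin n → ℝ | ∀ i, 0 < μ i}
      = Set.univ.pi (fun _ : Fin n => Set.Ioi (0:ℝ)) := by
    ext μ; simp [Set.mem_pi]
  rw [hset]
  exact isOpen_set_pi Set.finite_univ fun i _ => isOpen_Ioi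

lemma diff_apply_inv (μ : Fin n → ℝ) (hμ : ∀ i, 0 < μ i) (j : Fin n) :
    DifferentiableAt ℝ (fun ν : Fin n → ℝ => (ν j)⁻¹) μ := by
  have h1 : DifferentiableAt ℝ (fun ν : Fin n → ℝ => ν j) μ :=
    (ContinuousLinearMap.proj j : (Fin n → ℝ) →L[ℝ] ℝ).differentiableAt
  exact h1.inv (hμ j).ne'

lemma diff_Phi (hn : 2 ≤ n) (μ : Fin n → ℝ) (hμ : ∀ i, 0 < μ i) :
    DifferentiableAt ℝ (Phi n) μ := by
  have ht : ∀ i, (0:ℝ) < (μ i)⁻¹ := fun i => inv_pos.2 (hμ i)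
  have hsq := sig_sub_pos hn _ ht
  have hS : DifferentiableAt ℝ (fun ν : Fin n → ℝ => ∑ j, (ν j)⁻¹) μ :=
    DifferentiableAt.fun_sum fun j _ => diff_apply_inv μ hμ j
  have hQ : DifferentiableAt ℝ (fun ν : Fin n → ℝ => ∑ j, ((ν j)⁻¹) ^ 2) μ :=
    DifferentiableAt.fun_sum fun j _ => (diff_apply_inv μ hμ j).pow 2
  have hden_ne : (∑ j, (μ j)⁻¹) ^ 2 - ∑ j, ((μ j)⁻¹) ^ 2 ≠ 0 := hsq.ne'
  unfold Phi
  exact (hS.const_mul 2).mul (((hS.pow 2).sub hQ).inv hden_ne)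

lemma erase_nonempty (hn : 2 ≤ n) (i : Fin n) :
    (Finset.univ.erase i).Nonempty := by
  rw [← Finset.card_pos, Finset.card_erase_of_mem (Finset.mem_univ i),
    Finset.card_univ, Fintype.card_fin]
  omega

theorem part2 (hn : 2 ≤ n) (μ : Fin n → ℝ) (hμ : ∀ i, 0 < μ i) (i : Fin n) :
    0 < fderiv ℝ (fun ν : Fin n → ℝ => esymm n (n - 1) ν / esymm n (n - 2) ν) μ
      (Pi.single i 1) := by
  have ht : ∀ j, (0:ℝ) < (μ j)⁻¹ := fun j => inv_pos.2 (hμ j)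
  have hS0 : 0 < ∑ j, (μ j)⁻¹ := sig1_pos (by omega) _ ht
  have hsq : 0 < (∑ j, (μ j)⁻¹) ^ 2 - ∑ j, ((μ j)⁻¹) ^ 2 := sig_sub_pos hn _ ht
  set v : Fin n → ℝ := Pi.single i 1 with hv
  have hev : (fun ν : Fin n → ℝ => esymm n (n - 1) ν / esymm n (n - 2) ν)
      =ᶠ[nhds μ] Phi n := by
    filter_upwards [isOpen_cone.mem_nhds hμ] with ν hν
    exact bridge2 hn ν hν
  rw [hev.fderiv_eq]
  -- the line s ↦ μ + s • v
  have hline : HasDerivAt (fun s : ℝ => μ + s • v) v 0 := by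
    have h1 : HasDerivAt (fun s : ℝ => s • v) ((1:ℝ) • v) 0 :=
      (hasDerivAt_id 0).smul_const v
    simpa using h1.const_add μ
  have hdiff := diff_Phi hn μ hμ
  have h0 : μ + (0:ℝ) • v = μ := by simp
  have hcomp : HasDerivAt (fun s : ℝ => Phi n (μ + s • v))
      (fderiv ℝ (Phi n) μ v) 0 := by
    have hlh : HasFDerivAt (Phi n) (fderiv ℝ (Phi n) μ) (μ + (0:ℝ) • v) := by
      rw [h0]; exact hdiff.hasFDerivAt
    exact hlh.comp_hasDerivAt 0 hline
  -- explicit derivative of the composite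
  have hvj : ∀ (j : Fin n) (s : ℝ), (μ + s • v) j = μ j + s * v j := fun j s => by
    simp
  have hinner : ∀ j, HasDerivAt (fun s : ℝ => ((μ + s • v) j)⁻¹)
      (-(v j) * ((μ j)⁻¹) ^ 2) 0 := by
    intro j
    have hfun : (fun s : ℝ => ((μ + s • v) j)⁻¹) = fun s => (μ j + s * v j)⁻¹ :=
      funext fun s => by rw [hvj]
    rw [hfun]
    have h1 : HasDerivAt (fun s : ℝ => μ j + s * v j) (v j) 0 := by
      simpa using (hasDerivAt_mul_const (v j)).const_add (μ j)
    have h2 := h1.inv (by simpa using (hμ j).ne')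
    refine h2.congr_deriv ?_; symm
    simp
    field_simp
  have hS : HasDerivAt (fun s : ℝ => ∑ j, ((μ + s • v) j)⁻¹)
      (-(((μ i)⁻¹) ^ 2)) 0 := by
    have h := HasDerivAt.fun_sum (fun j (_ : j ∈ Finset.univ) => hinner j)
    refine h.congr_deriv ?_; symm
    rw [hv]
    simp [Pi.single_apply, ite_mul]
  have hQ : HasDerivAt (fun s : ℝ => ∑ j, (((μ + s • v) j)⁻¹) ^ 2)
      (-2 * ((μ i)⁻¹) ^ 3) 0 := by
    have hj : ∀ j, HasDerivAt (fun s : ℝ => (((μ + s • v) j)⁻¹) ^ 2)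
        (-2 * (v j) * ((μ j)⁻¹) ^ 3) 0 := by
      intro j
      have h := (hinner j).pow 2
      refine h.congr_deriv ?_; symm
      rw [hvj]
      simp
      ring
    have h := HasDerivAt.fun_sum (fun j (_ : j ∈ Finset.univ) => hj j)
    refine h.congr_deriv ?_; symm
    rw [hv]
    simp [Pi.single_apply, ite_mul, mul_ite]
  set S0 := ∑ j, (μ j)⁻¹ with hS0def
  set Q0 := ∑ j, ((μ j)⁻¹) ^ 2 with hQ0def
  set T := (μ i)⁻¹ with hTdef
  set D := S0 ^ 2 - Q0 with hDdef
  have hNum : HasDerivAt (fun s : ℝ => 2 * ∑ j, ((μ + s • v) j)⁻¹)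
      (2 * -(T ^ 2)) 0 := hS.const_mul 2
  have hDenFun : HasDerivAt
      (fun s : ℝ => (∑ j, ((μ + s • v) j)⁻¹) ^ 2 - ∑ j, (((μ + s • v) j)⁻¹) ^ 2)
      (2 * S0 * -(T ^ 2) + 2 * T ^ 3) 0 := by
    have h := (hS.pow 2).sub hQ
    refine h.congr_deriv ?_; symm
    simp only [h0]
    rw [hS0def]
    ring
  have hne0 : ((∑ j, ((μ + (0:ℝ) • v) j)⁻¹) ^ 2
      - ∑ j, (((μ + (0:ℝ) • v) j)⁻¹) ^ 2) ≠ 0 := by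
    simp only [h0]
    exact hsq.ne'
  have hinvD : HasDerivAt
      (fun s : ℝ => ((∑ j, ((μ + s • v) j)⁻¹) ^ 2 - ∑ j, (((μ + s • v) j)⁻¹) ^ 2)⁻¹)
      (-(2 * S0 * -(T ^ 2) + 2 * T ^ 3) / D ^ 2) 0 := by
    have h := hDenFun.inv hne0
    refine h.congr_deriv ?_; symm
    simp only [h0]
    rfl
  have hg : HasDerivAt (fun s : ℝ => Phi n (μ + s • v))
      (2 * T ^ 2 * (S0 ^ 2 + Q0 - 2 * S0 * T) / D ^ 2) 0 := by
    show HasDerivAt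
      (fun s : ℝ => 2 * (∑ j, ((μ + s • v) j)⁻¹)
        * ((∑ j, ((μ + s • v) j)⁻¹) ^ 2 - ∑ j, (((μ + s • v) j)⁻¹) ^ 2)⁻¹)
      (2 * T ^ 2 * (S0 ^ 2 + Q0 - 2 * S0 * T) / D ^ 2) 0
    have h := hNum.mul hinvD
    refine h.congr_deriv ?_; symm
    simp only [h0]
    rw [← hS0def, ← hQ0def, ← hDdef]
    have hQ0' : Q0 = S0 ^ 2 - D := by rw [hDdef]; ring
    rw [hQ0']
    have hDne : D ≠ 0 := ne_of_gt hsq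
    field_simp
    ring
  have huniq : fderiv ℝ (Phi n) μ v
      = 2 * T ^ 2 * (S0 ^ 2 + Q0 - 2 * S0 * T) / D ^ 2 := hcomp.unique hg
  show 0 < fderiv ℝ (Phi n) μ v
  rw [huniq]
  have hsplit : (∑ j ∈ Finset.univ.erase i, (μ j)⁻¹) + T = S0 :=
    Finset.sum_erase_add Finset.univ _ (Finset.mem_univ i)
  have hsplit2 : (∑ j ∈ Finset.univ.erase i, ((μ j)⁻¹) ^ 2) + T ^ 2 = Q0 :=
    Finset.sum_erase_add Finset.univ _ (Finset.mem_univ i)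
  have hpos : 0 < ∑ j ∈ Finset.univ.erase i, (μ j)⁻¹ :=
    Finset.sum_pos (fun j _ => ht j) (erase_nonempty hn i)
  have hpos2 : 0 ≤ ∑ j ∈ Finset.univ.erase i, ((μ j)⁻¹) ^ 2 :=
    Finset.sum_nonneg fun j _ => sq_nonneg _
  have hkey : 0 < S0 ^ 2 + Q0 - 2 * S0 * T := by
    nlinarith [mul_pos hpos hpos]
  exact div_pos (mul_pos (mul_pos (by norm_num) (pow_pos (ht i) 2)) hkey)
    (pow_pos hsq 2)

end MLaux

/-- `Λ(μ) = σ_{n−1}(μ)/σ_{n−2}(μ)` is concave on the positive cone, with all partial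
derivatives strictly positive there. -/
theorem Lambda_concave_grad_pos (n : ℕ) (hn : 2 ≤ n) :
    ConcaveOn ℝ {μ : Fin n → ℝ | ∀ i, 0 < μ i}
      (fun μ => esymm n (n - 1) μ / esymm n (n - 2) μ) ∧
    ∀ μ : Fin n → ℝ, (∀ i, 0 < μ i) → ∀ i : Fin n,
      0 < fderiv ℝ (fun ν : Fin n → ℝ => esymm n (n - 1) ν / esymm n (n - 2) ν) μ
        (Pi.single i 1) := by
  exact ⟨MLaux.part1 hn, fun μ hμ i => MLaux.part2 hn μ hμ i⟩
end

section
/- Let u be a C¹ function on ℝⁿ such that u(x) + m|x|²/2 is convex, where m = tan|γ| for some γ ∈ (−π/2, 0], and let α < γ with δ = (γ − α)/2 > 0 and α + δ ∈ (−π/2, 0). Set c̃ = cos(π/2 + α + δ), s̃ = sin(π/2 + α + δ), and define x̄ = c̃x + s̃Du(x). Then for all x¹, x² ∈ ℝⁿ, |x̄² − x̄¹| ≥ c̃ (1 − tan|γ| / tan|γ + δ|) |x² − x¹|. In particular, the map x ↦ c̃x + s̃Du(x) is injective on ℝⁿ. -/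
open scoped Real
open Real

open scoped RealInnerProductSpace

/-- Monotonicity of the gradient of a convex differentiable function. -/
lemma gradient_inner_mono {F : Type*} [NormedAddCommGroup F] [InnerProductSpace ℝ F]
    [CompleteSpace F] {g : F → ℝ} {G : F → F}
    (hconv : ConvexOn ℝ Set.univ g)
    (hd : ∀ z, HasFDerivAt g ((InnerProductSpace.toDual ℝ F) (G z)) z)
    (x y : F) : ⟪G x, y - x⟫ ≤ ⟪G y, y - x⟫ := by
  set v := y - x with hv
  have hline : ∀ r : ℝ, HasDerivAt (fun r : ℝ => x + r • v) v r := by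
    intro r
    simpa using ((hasDerivAt_id r).smul_const v).const_add x
  have hφ : ∀ r : ℝ, HasDerivAt (fun r : ℝ => g (x + r • v)) ⟪G (x + r • v), v⟫ r := by
    intro r
    have h := (hd (x + r • v)).comp_hasDerivAt r (hline r)
    simpa [InnerProductSpace.toDual_apply_apply, Function.comp_def] using h
  have hφconv : ConvexOn ℝ Set.univ (fun r : ℝ => g (x + r • v)) := by
    have h := hconv.comp_affineMap (AffineMap.lineMap x y : ℝ →ᵃ[ℝ] F)
    have heq : (fun r : ℝ => g (x + r • v)) = g ∘ (AffineMap.lineMap x y : ℝ →ᵃ[ℝ] F) := by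
      ext r
      simp only [Function.comp_apply, AffineMap.lineMap_apply_module, hv]
      congr 1
      module
    rw [heq]
    simpa using h
  have h0 := hφ 0
  rw [zero_smul, add_zero] at h0
  have h1' := hφ 1
  rw [one_smul] at h1'
  have ha := hφconv.le_slope_of_hasDerivAt (Set.mem_univ (0 : ℝ)) (Set.mem_univ 1) one_pos h0
  have hb := hφconv.slope_le_of_hasDerivAt (Set.mem_univ (0 : ℝ)) (Set.mem_univ 1) one_pos h1'
  have hab := ha.trans hb
  have hxy : x + v = y := by rw [hv]; abel
  rwa [hxy] at hab

set_option maxHeartbeats 1000000 in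
/-- Distance expansion for the rotated graph: if `u + m|x|²/2` is convex with `m = tan|γ|`,
`γ ∈ (−π/2, 0]`, `α < γ`, `δ = (γ−α)/2`, `α + δ ∈ (−π/2, 0)`, and
`x̄ = c̃x + s̃ Du(x)` with `c̃ = cos(π/2+α+δ)`, `s̃ = sin(π/2+α+δ)`, then
`|x̄² − x̄¹| ≥ c̃ (1 − tan|γ|/tan(|γ|+δ)) |x² − x¹|`; in particular `x ↦ x̄` is injective. -/
theorem rotated_graph_expansion {n : ℕ} (u : EuclideanSpace ℝ (Fin n) → ℝ)
    (γ α δ m c s : ℝ)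
    (hu : ContDiff ℝ 1 u)
    (hγ : γ ∈ Set.Ioc (-(π / 2)) 0)
    (hm : m = Real.tan |γ|)
    (hconv : ConvexOn ℝ Set.univ (fun x : EuclideanSpace ℝ (Fin n) => u x + m * ‖x‖ ^ 2 / 2))
    (hαγ : α < γ) (hδ : δ = (γ - α) / 2)
    (hαδ : α + δ ∈ Set.Ioo (-(π / 2)) 0)
    (hc : c = Real.cos (π / 2 + α + δ)) (hs : s = Real.sin (π / 2 + α + δ)) :
    (∀ x1 x2 : EuclideanSpace ℝ (Fin n),
      c * (1 - Real.tan |γ| / Real.tan (|γ| + δ)) * ‖x2 - x1‖ ≤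
        ‖(c • x2 + s • gradient u x2) - (c • x1 + s • gradient u x1)‖) ∧
    Function.Injective (fun x : EuclideanSpace ℝ (Fin n) => c • x + s • gradient u x) := by
  have hθ1 : -(π / 2) < α + δ := hαδ.1
  have hθ2 : α + δ < 0 := hαδ.2
  have hpi := Real.pi_pos
  have habs : |γ| = -γ := abs_of_nonpos hγ.2
  have hδpos : 0 < δ := by rw [hδ]; linarith
  have hcval : c = -Real.sin (α + δ) := by
    rw [hc, show π / 2 + α + δ = (α + δ) + π / 2 by ring, Real.cos_add_pi_div_two]
  have hsval : s = Real.cos (α + δ) := by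
    rw [hs, show π / 2 + α + δ = (α + δ) + π / 2 by ring, Real.sin_add_pi_div_two]
  have hcpos : 0 < c := by
    rw [hcval]
    have := Real.sin_neg_of_neg_of_neg_pi_lt hθ2 (by linarith)
    linarith
  have hspos : 0 < s := by
    rw [hsval]
    exact Real.cos_pos_of_mem_Ioo ⟨hθ1, by linarith⟩
  have hang : |γ| + δ = -(α + δ) := by rw [habs]; rw [hδ] at *; ring
  have htan : Real.tan (|γ| + δ) = c / s := by
    rw [hang, Real.tan_neg, Real.tan_eq_sin_div_cos, hcval, hsval]
    ring
  have hmlt : s * m < c := by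
    have h1 : Real.tan |γ| < Real.tan (|γ| + δ) := by
      apply Real.tan_lt_tan_of_nonneg_of_lt_pi_div_two (abs_nonneg γ)
      · rw [hang]; linarith
      · linarith
    rw [htan] at h1
    rw [hm]
    calc s * Real.tan |γ| < s * (c / s) := by exact mul_lt_mul_of_pos_left h1 hspos
    _ = c := by field_simp
  have hK : c * (1 - Real.tan |γ| / Real.tan (|γ| + δ)) = c - s * m := by
    rw [htan, hm]
    field_simp
  -- monotonicity of the gradient of g = u + m‖·‖²/2
  have hud : Differentiable ℝ u := hu.differentiable one_ne_zero
  set G : EuclideanSpace ℝ (Fin n) → EuclideanSpace ℝ (Fin n) := fun z => gradient u z + m • z with hG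
  have hd : ∀ z : EuclideanSpace ℝ (Fin n), HasFDerivAt (fun x : EuclideanSpace ℝ (Fin n) => u x + m * ‖x‖ ^ 2 / 2)
      ((InnerProductSpace.toDual ℝ (EuclideanSpace ℝ (Fin n))) (G z)) z := by
    intro z
    have h1 : HasFDerivAt u ((InnerProductSpace.toDual ℝ (EuclideanSpace ℝ (Fin n))) (gradient u z)) z :=
      hasGradientAt_iff_hasFDerivAt.mp (hud z).hasGradientAt
    have h2 : HasFDerivAt (fun x : EuclideanSpace ℝ (Fin n) => ‖x‖ ^ 2) (2 • (innerSL ℝ z)) z :=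
      (hasStrictFDerivAt_norm_sq z).hasFDerivAt
    have h3 := h1.add (h2.const_mul (m / 2))
    have heq : (fun x : EuclideanSpace ℝ (Fin n) => u x + m * ‖x‖ ^ 2 / 2) =
        fun x : EuclideanSpace ℝ (Fin n) => u x + m / 2 * ‖x‖ ^ 2 := by
      ext x; ring
    rw [heq]
    convert h3 using 1
    case e'_8 => rfl
    case e'_9 => rfl
    case e'_11 => rfl
    case e'_12 =>
      ext v
      simp only [hG, ContinuousLinearMap.add_apply, InnerProductSpace.toDual_apply_apply,
        ContinuousLinearMap.coe_smul', Pi.smul_apply, innerSL_apply_apply, smul_eq_mul]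
      rw [inner_add_left, real_inner_smul_left]
      ring
    all_goals rfl
  have mono : ∀ x1 x2 : EuclideanSpace ℝ (Fin n), ⟪G x1, x2 - x1⟫ ≤ ⟪G x2, x2 - x1⟫ :=
    fun x1 x2 => gradient_inner_mono hconv hd x1 x2
  have key : ∀ x1 x2 : EuclideanSpace ℝ (Fin n), (c - s * m) * ‖x2 - x1‖ ≤
      ‖(c • x2 + s • gradient u x2) - (c • x1 + s • gradient u x1)‖ := by
    intro x1 x2
    set v := x2 - x1 with hv
    set w := (c • x2 + s • gradient u x2) - (c • x1 + s • gradient u x1) with hw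
    have hmono := mono x1 x2
    have hGx : ∀ z : EuclideanSpace ℝ (Fin n), ⟪G z, v⟫ = ⟪gradient u z, v⟫ + m * ⟪z, v⟫ := by
      intro z
      simp only [hG]
      rw [inner_add_left, real_inner_smul_left]
    rw [← hv, hGx x1, hGx x2] at hmono
    have hd2 : ⟪x2, v⟫ - ⟪x1, v⟫ = ‖v‖ ^ 2 := by
      rw [← inner_sub_left, ← hv, real_inner_self_eq_norm_sq]
    have hwv : ⟪w, v⟫ = c * ‖v‖ ^ 2 + s * (⟪gradient u x2, v⟫ - ⟪gradient u x1, v⟫) := by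
      rw [hw]
      simp only [inner_sub_left, inner_add_left, real_inner_smul_left]
      linear_combination c * hd2
    have h4 : m * (⟪x2, v⟫ - ⟪x1, v⟫) = m * ‖v‖ ^ 2 := by rw [hd2]
    have h5 : -(m * ‖v‖ ^ 2) ≤ ⟪gradient u x2, v⟫ - ⟪gradient u x1, v⟫ := by linarith
    have hinner : (c - s * m) * ‖v‖ ^ 2 ≤ ⟪w, v⟫ := by
      rw [hwv]
      nlinarith [mul_le_mul_of_nonneg_left h5 hspos.le]
    have hcs : ⟪w, v⟫ ≤ ‖w‖ * ‖v‖ := real_inner_le_norm w v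
    rcases eq_or_ne v 0 with h0 | h0
    · rw [h0, norm_zero, mul_zero]
      exact norm_nonneg w
    · have hvpos : 0 < ‖v‖ := norm_pos_iff.mpr h0
      have h := hinner.trans hcs
      rw [sq] at h
      nlinarith
  refine ⟨fun x1 x2 => by rw [hK]; exact key x1 x2, ?_⟩
  intro x1 x2 hx
  simp only at hx
  have h := key x1 x2
  rw [← hx, sub_self, norm_zero] at h
  have hKpos : (0 : ℝ) < c - s * m := by linarith
  have h2' : ‖x2 - x1‖ ≤ 0 := by
    have h'' : (c - s * m) * ‖x2 - x1‖ ≤ (c - s * m) * 0 := by rw [mul_zero]; exact h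
    exact le_of_mul_le_mul_left h'' hKpos
  have h2 : ‖x2 - x1‖ = 0 := le_antisymm h2' (norm_nonneg _)
  have h3 := sub_eq_zero.mp (norm_eq_zero.mp h2)
  exact h3.symm
end

section
/- Let F be a C² function on symmetric n×n matrices such that A ↦ F(A^{-1}) is convex on positive definite matrices. Then at any positive definite diagonal matrix D = diag(λ₁,…,λₙ) with λ_i > 0, for every symmetric matrix X, −Σ_{i,j,k,l} F_{ij,kl}(D) X_{ij} X_{kl} ≤ 2 Σ_{i,j} F_{ii}(D) λ_j^{-1} X_{ij}², where F_{ij,kl} are the second partial derivatives of F and F_{ii} the first partials (which are diagonal when F is a symmetric function of the eigenvalues). -/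
open scoped Real
open Real Matrix

attribute [local instance] Matrix.normedAddCommGroup Matrix.normedSpace

namespace ALLaux

variable {n : ℕ}

abbrev Mat (n : ℕ) := Matrix (Fin n) (Fin n) ℝ

noncomputable instance clmRealNACG : NormedAddCommGroup (Matrix (Fin n) (Fin n) ℝ →L[ℝ] ℝ) :=
  ContinuousLinearMap.toNormedAddCommGroup
noncomputable instance clmRealNS : NormedSpace ℝ (Matrix (Fin n) (Fin n) ℝ →L[ℝ] ℝ) :=
  ContinuousLinearMap.toNormedSpace
noncomputable instance clmMatNACG :
    NormedAddCommGroup (Matrix (Fin n) (Fin n) ℝ →L[ℝ] Matrix (Fin n) (Fin n) ℝ) :=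
  ContinuousLinearMap.toNormedAddCommGroup
noncomputable instance clmMatNS :
    NormedSpace ℝ (Matrix (Fin n) (Fin n) ℝ →L[ℝ] Matrix (Fin n) (Fin n) ℝ) :=
  ContinuousLinearMap.toNormedSpace

theorem det_diffAt {M : ℝ → Mat n} {t : ℝ}
    (hM : ∀ i j, DifferentiableAt ℝ (fun s => M s i j) t) :
    DifferentiableAt ℝ (fun s => (M s).det) t := by
  simp only [Matrix.det_apply]
  apply DifferentiableAt.fun_sum
  intro σ _
  have : DifferentiableAt ℝ (fun s => ∏ i, M s (σ i) i) t :=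
    DifferentiableAt.fun_finsetProd (fun i _ => hM (σ i) i)
  simpa [Units.smul_def, zsmul_eq_mul] using this.const_mul ((Equiv.Perm.sign σ : ℤ) : ℝ)

theorem mat_diffAt {M : ℝ → Mat n} {t : ℝ}
    (hM : ∀ i j, DifferentiableAt ℝ (fun s => M s i j) t) :
    DifferentiableAt ℝ M t := by
  have : M = fun s => ∑ i : Fin n, ∑ j : Fin n, M s i j • Matrix.single i j (1:ℝ) := by
    funext s; simpa using Matrix.matrix_eq_sum_single (M s)
  rw [this]
  exact DifferentiableAt.fun_sum fun i _ => DifferentiableAt.fun_sum fun j _ => (hM i j).smul_const _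

theorem inv_curve_diffAt {M : ℝ → Mat n} {t : ℝ}
    (hM : ∀ i j, DifferentiableAt ℝ (fun s => M s i j) t)
    (hdet : (M t).det ≠ 0) :
    DifferentiableAt ℝ (fun s => (M s)⁻¹) t := by
  have hfun : (fun s => (M s)⁻¹) = fun s => ((M s).det)⁻¹ • (M s).adjugate := by
    funext s; rw [Matrix.inv_def, Ring.inverse_eq_inv']
  rw [hfun]
  have hd : DifferentiableAt ℝ (fun s => ((M s).det)⁻¹) t := (det_diffAt hM).inv hdet
  have ha : DifferentiableAt ℝ (fun s => (M s).adjugate) t := by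
    apply mat_diffAt
    intro i j
    simp only [Matrix.adjugate_apply]
    apply det_diffAt
    intro a b
    rcases eq_or_ne a j with rfl | hab
    · simp only [Matrix.updateRow_self]
      exact differentiableAt_const _
    · simp only [Matrix.updateRow_ne hab]
      exact hM a b
  exact hd.smul ha

noncomputable def mulL (n : ℕ) : Mat n →L[ℝ] Mat n →L[ℝ] Mat n :=
  LinearMap.toContinuousLinearMap
    ((LinearMap.toContinuousLinearMap :
        (Mat n →ₗ[ℝ] Mat n) ≃ₗ[ℝ] (Mat n →L[ℝ] Mat n)).toLinearMap.comp
      (LinearMap.mul ℝ (Mat n)))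

@[simp] theorem mulL_apply (A B : Mat n) : mulL n A B = A * B := rfl

theorem _root_.HasDerivAt.matmul {A B : ℝ → Mat n} {A' B' : Mat n} {t : ℝ}
    (hA : HasDerivAt A A' t) (hB : HasDerivAt B B' t) :
    HasDerivAt (fun s => A s * B s) (A' * B t + A t * B') t := by
  have hc : HasDerivAt (fun s => mulL n (A s)) (mulL n A') t :=
    (mulL n).hasFDerivAt.comp_hasDerivAt t hA
  exact hc.clm_apply hB

theorem posdef_perturb (mu : Fin n → ℝ) (hmu : ∀ i, 0 < mu i) (Y : Mat n) (hY : Y.IsSymm) :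
    ∃ ε > 0, ∀ t : ℝ, |t| < ε → ((Matrix.diagonal mu + t • Y).IsSymm ∧
      (Matrix.diagonal mu + t • Y).PosDef) := by
  classical
  rcases Nat.eq_zero_or_pos n with hn | hn
  · refine ⟨1, one_pos, fun t _ => ⟨?_, ?_, fun x hx => absurd ?_ hx⟩⟩
    · ext i j; exact absurd i.2 (by omega)
    · ext i j; exact absurd i.2 (by omega)
    · ext i; exact absurd i.2 (by omega)
  have hne : (Finset.univ : Finset (Fin n)).Nonempty := Finset.univ_nonempty_iff.mpr ⟨⟨0, hn⟩⟩
  set m : ℝ := Finset.univ.inf' hne mu with hm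
  have hm0 : 0 < m := (Finset.lt_inf'_iff hne).mpr fun i _ => hmu i
  set C : ℝ := (∑ i, ∑ j, |Y i j|) + 1 with hC
  have hC0 : 0 < C := by positivity
  refine ⟨m / C, by positivity, fun t ht => ?_⟩
  have hsym : (Matrix.diagonal mu + t • Y).IsSymm := by
    rw [Matrix.IsSymm, Matrix.transpose_add, Matrix.transpose_smul,
      Matrix.diagonal_transpose, hY]
  refine ⟨hsym, Matrix.PosDef.of_dotProduct_mulVec_pos ?_ fun x hx => ?_⟩
  · rw [Matrix.IsHermitian, Matrix.conjTranspose_eq_transpose_of_trivial, hsym]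
  have hx2 : 0 < ∑ k, x k ^ 2 := by
    have : ∃ k, x k ≠ 0 := by
      by_contra h
      push_neg at h
      exact hx (funext h)
    rcases this with ⟨k, hk⟩
    have : (0:ℝ) < x k ^ 2 := by positivity
    exact this.trans_le (Finset.single_le_sum (f := fun k => x k ^ 2)
      (fun i _ => sq_nonneg _) (Finset.mem_univ k))
  have key : star x ⬝ᵥ (Matrix.diagonal mu + t • Y) *ᵥ x
      = (∑ i, mu i * x i ^ 2) + t * ∑ i, ∑ j, x i * Y i j * x j := by
    rw [Matrix.add_mulVec, Matrix.smul_mulVec, dotProduct_add, dotProduct_smul]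
    congr 1
    · simp only [star_trivial, dotProduct, Matrix.mulVec_diagonal]
      exact Finset.sum_congr rfl fun i _ => by ring
    · simp only [star_trivial, dotProduct, Matrix.mulVec, smul_eq_mul, Finset.mul_sum]
      exact Finset.sum_congr rfl fun i _ => Finset.sum_congr rfl fun j _ => by ring
  rw [key]
  have hbound : |∑ i, ∑ j, x i * Y i j * x j| ≤ C * ∑ k, x k ^ 2 := by
    calc |∑ i, ∑ j, x i * Y i j * x j| ≤ ∑ i, ∑ j, |x i * Y i j * x j| := by
          refine (Finset.abs_sum_le_sum_abs _ _).trans ?_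
          exact Finset.sum_le_sum fun i _ => Finset.abs_sum_le_sum_abs _ _
      _ ≤ ∑ i, ∑ j, |Y i j| * ∑ k, x k ^ 2 := by
          refine Finset.sum_le_sum fun i _ => Finset.sum_le_sum fun j _ => ?_
          have h1 : |x i * Y i j * x j| = |Y i j| * (|x i| * |x j|) := by
            rw [abs_mul, abs_mul]; ring
          rw [h1]
          refine mul_le_mul_of_nonneg_left ?_ (abs_nonneg _)
          have h2 : |x i| * |x j| ≤ (x i ^ 2 + x j ^ 2) / 2 := by
            nlinarith [sq_nonneg (|x i| - |x j|), sq_abs (x i), sq_abs (x j)]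
          refine h2.trans ?_
          have hi : x i ^ 2 ≤ ∑ k, x k ^ 2 := by
            simpa using Finset.single_le_sum (f := fun k => x k ^ 2)
              (fun k _ => sq_nonneg _) (Finset.mem_univ i)
          have hj : x j ^ 2 ≤ ∑ k, x k ^ 2 := by
            simpa using Finset.single_le_sum (f := fun k => x k ^ 2)
              (fun k _ => sq_nonneg _) (Finset.mem_univ j)
          linarith
      _ ≤ C * ∑ k, x k ^ 2 := by
          simp_rw [← Finset.sum_mul]
          refine mul_le_mul_of_nonneg_right ?_ (le_of_lt hx2)
          simp only [hC]; linarith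
  have hlow : (∑ i, mu i * x i ^ 2) ≥ m * ∑ k, x k ^ 2 := by
    rw [Finset.mul_sum]
    refine Finset.sum_le_sum fun i _ => ?_
    exact mul_le_mul_of_nonneg_right (Finset.inf'_le _ (Finset.mem_univ i)) (sq_nonneg _)
  have hstrict : |t * ∑ i, ∑ j, x i * Y i j * x j| < m * ∑ k, x k ^ 2 := by
    rcases eq_or_ne t 0 with rfl | ht0
    · simpa using by positivity
    · have h1 : |t| * |∑ i, ∑ j, x i * Y i j * x j| < (m / C) * (C * ∑ k, x k ^ 2) := by
        rcases eq_or_lt_of_le hbound with h | h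
        · have hpos : 0 < C * ∑ k, x k ^ 2 := by positivity
          calc |t| * |∑ i, ∑ j, x i * Y i j * x j| ≤ |t| * (C * ∑ k, x k ^ 2) := by
                rw [← h]
            _ < (m / C) * (C * ∑ k, x k ^ 2) := by
                exact mul_lt_mul_of_pos_right ht hpos
        · calc |t| * |∑ i, ∑ j, x i * Y i j * x j| ≤ (m/C) * |∑ i, ∑ j, x i * Y i j * x j| :=
              mul_le_mul_of_nonneg_right ht.le (abs_nonneg _)
            _ < (m/C) * (C * ∑ k, x k ^ 2) := mul_lt_mul_of_pos_left h (by positivity)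
      have h2 : (m / C) * (C * ∑ k, x k ^ 2) = m * ∑ k, x k ^ 2 := by field_simp
      rw [abs_mul]; linarith
  have := neg_abs_le (t * ∑ i, ∑ j, x i * Y i j * x j)
  linarith

set_option linter.unreachableTactic false in
set_option linter.unusedTactic false in
set_option linter.unnecessarySeqFocus false in
theorem offdiag_deriv_zero (F : Mat n → ℝ) (hF : Differentiable ℝ F)
    (horth : ∀ Q A : Mat n, Qᵀ * Q = 1 → F (Qᵀ * A * Q) = F A)
    (lam : Fin n → ℝ) {i k : Fin n} (hik : i ≠ k) :
    fderiv ℝ F (Matrix.diagonal lam) (Matrix.single i k 1) = 0 := by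
  classical
  set q : Fin n → ℝ := fun m => if m = i then (-1 : ℝ) else 1 with hq
  set Q : Mat n := Matrix.diagonal q with hQdef
  have hQt : Qᵀ = Q := Matrix.diagonal_transpose q
  have hQQ : Qᵀ * Q = 1 := by
    rw [hQt, hQdef, Matrix.diagonal_mul_diagonal]
    have h1 : (fun m => q m * q m) = fun _ => (1:ℝ) := by
      funext m; by_cases hm : m = i <;> simp [hq, hm]
    rw [h1, Matrix.diagonal_one]
  set Llin : Mat n →ₗ[ℝ] Mat n :=
    (LinearMap.mulRight ℝ Q).comp (LinearMap.mulLeft ℝ Q) with hLlin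
  set L : Mat n →L[ℝ] Mat n := LinearMap.toContinuousLinearMap Llin with hL
  have hLapp : ∀ A, L A = Q * A * Q := fun A => rfl
  have hFL : (F ∘ L) = F := by
    funext A
    have := horth Q A hQQ
    rw [hQt] at this
    simpa [Function.comp, hLapp] using this
  have hLD : L (Matrix.diagonal lam) = Matrix.diagonal lam := by
    rw [hLapp, hQdef]
    ext a b
    by_cases hab : a = b
    · subst hab
      by_cases ha : a = i <;>
        simp [Matrix.diagonal_mul, Matrix.mul_diagonal, Matrix.diagonal_apply, hq, ha]
    · simp [Matrix.diagonal_mul, Matrix.mul_diagonal, Matrix.diagonal_apply, hab]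
  have hcomp : fderiv ℝ (F ∘ L) (Matrix.diagonal lam)
      = (fderiv ℝ F (Matrix.diagonal lam)).comp L := by
    have h := (hF (L (Matrix.diagonal lam))).hasFDerivAt.comp (Matrix.diagonal lam) L.hasFDerivAt
    rw [hLD] at h
    exact h.fderiv
  have hLE : L (Matrix.single i k 1) = -(Matrix.single i k 1) := by
    rw [hLapp]
    ext a b
    simp only [hQdef, Matrix.diagonal_mul, Matrix.mul_diagonal, Matrix.neg_apply,
      Matrix.single, Matrix.of_apply]
    by_cases ha : i = a <;> by_cases hb : k = b <;>
      simp [ha, hb, hq] <;> subst_vars <;> simp [hik, Ne.symm hik] <;>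
        simp [hq, (Ne.symm hik : k ≠ i)]
  have key : fderiv ℝ F (Matrix.diagonal lam) (Matrix.single i k 1)
      = fderiv ℝ F (Matrix.diagonal lam) (L (Matrix.single i k 1)) := by
    conv_lhs => rw [← hFL, hcomp]
    rfl
  rw [hLE, map_neg] at key
  linarith [key]

end ALLaux

open ALLaux

/-- Alvarez–Lasry–Lions inverse-convexity inequality: if `F` is `C²`, invariant under
orthogonal conjugation (a symmetric function of the eigenvalues), and `A ↦ F(A⁻¹)` is convex
on positive definite symmetric matrices, then at a positive diagonal matrix `D = diagonal λ`,
for every symmetric `X`: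
`−Σ F_{ij,kl}(D) X_{ij} X_{kl} ≤ 2 Σ F_{ii}(D) λ_j⁻¹ X_{ij}²`. -/
theorem inverse_convexity_inequality {n : ℕ} (F : Matrix (Fin n) (Fin n) ℝ → ℝ)
    (hF : ContDiff ℝ 2 F)
    (horth : ∀ Q A : Matrix (Fin n) (Fin n) ℝ, Qᵀ * Q = 1 → F (Qᵀ * A * Q) = F A)
    (hconv : ConvexOn ℝ {A : Matrix (Fin n) (Fin n) ℝ | A.IsSymm ∧ A.PosDef}
      (fun A => F A⁻¹))
    (lam : Fin n → ℝ) (hlam : ∀ i, 0 < lam i)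
    (X : Matrix (Fin n) (Fin n) ℝ) (hX : X.IsSymm) :
    -(∑ i, ∑ j, ∑ k, ∑ l,
        (fderiv ℝ (fun A => fderiv ℝ F A (Matrix.single k l 1))
          (Matrix.diagonal lam) (Matrix.single i j 1)) * X i j * X k l)
      ≤ 2 * ∑ i, ∑ j,
          (fderiv ℝ F (Matrix.diagonal lam) (Matrix.single i i 1))
            * (lam j)⁻¹ * (X i j) ^ 2 := by
  classical
  set D : Mat n := Matrix.diagonal lam with hD
  set Ed : Mat n := Matrix.diagonal (fun i => (lam i)⁻¹) with hEd
  have hED : Ed * D = 1 := by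
    rw [hEd, hD, Matrix.diagonal_mul_diagonal]
    have h : (fun i => (lam i)⁻¹ * lam i) = fun _ => (1:ℝ) :=
      funext fun i => inv_mul_cancel₀ (hlam i).ne'
    rw [h, Matrix.diagonal_one]
  have hDE : D * Ed = 1 := by
    rw [hEd, hD, Matrix.diagonal_mul_diagonal]
    have h : (fun i => lam i * (lam i)⁻¹) = fun _ => (1:ℝ) :=
      funext fun i => mul_inv_cancel₀ (hlam i).ne'
    rw [h, Matrix.diagonal_one]
  set Y : Mat n := -(Ed * X * Ed) with hY
  have hEsymm : Ed.IsSymm := by rw [hEd]; exact Matrix.isSymm_diagonal _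
  have hYsymm : Y.IsSymm := by
    rw [Matrix.IsSymm, hY, Matrix.transpose_neg, Matrix.transpose_mul, Matrix.transpose_mul,
      hEsymm, hX, ← mul_assoc]
  obtain ⟨ε, hε, hmem⟩ :=
    posdef_perturb (fun i => (lam i)⁻¹) (fun i => inv_pos.mpr (hlam i)) Y hYsymm
  set Am : ℝ → Mat n := fun t => Ed + t • Y with hAm
  have hmem' : ∀ t : ℝ, |t| < ε → (Am t).IsSymm ∧ (Am t).PosDef := by
    intro t ht
    have := hmem t ht
    rwa [hAm, hEd]
  have hAder : ∀ t : ℝ, HasDerivAt Am Y t := by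
    intro t
    have h1 : HasDerivAt (fun s : ℝ => s • Y) ((1:ℝ) • Y) t := (hasDerivAt_id t).smul_const Y
    have h2 := h1.const_add Ed
    rw [one_smul] at h2
    exact h2
  have hdet : ∀ t : ℝ, |t| < ε → IsUnit (Am t).det :=
    fun t ht => ((hmem' t ht).2.det_pos).ne'.isUnit
  set φ : ℝ → Mat n := fun t => (Am t)⁻¹ with hφdef
  have hφdiff : ∀ t : ℝ, |t| < ε → DifferentiableAt ℝ φ t := by
    intro t ht
    refine inv_curve_diffAt (fun i j => ?_) ((hmem' t ht).2.det_pos).ne'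
    have h : (fun s : ℝ => Am s i j) = fun s => Ed i j + s * Y i j := by
      funext s; simp [hAm, Matrix.add_apply, Matrix.smul_apply, smul_eq_mul]
    rw [h]; exact (differentiableAt_id.mul_const _).const_add _
  have hopen : ∀ t : ℝ, |t| < ε → ∀ᶠ s in nhds t, |s| < ε := by
    intro t ht
    have h : IsOpen {s : ℝ | |s| < ε} := isOpen_lt continuous_abs continuous_const
    exact h.eventually_mem ht
  have hφder : ∀ t : ℝ, |t| < ε → HasDerivAt φ (-(φ t * (Y * φ t))) t := by
    intro t ht
    have hd := (hφdiff t ht).hasDerivAt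
    have hK : HasDerivAt (fun s => Am s * φ s) (Y * φ t + Am t * deriv φ t) t :=
      (hAder t).matmul hd
    have hconst : HasDerivAt (fun s => Am s * φ s) 0 t := by
      have hev : (fun s => Am s * φ s) =ᶠ[nhds t] fun _ => (1 : Mat n) := by
        filter_upwards [hopen t ht] with s hs
        exact Matrix.mul_nonsing_inv _ (hdet s hs)
      exact (hasDerivAt_const t (1 : Mat n)).congr_of_eventuallyEq hev
    have huniq : Y * φ t + Am t * deriv φ t = 0 := hK.unique hconst
    have h2 : Am t * deriv φ t = -(Y * φ t) := by
      have := eq_neg_of_add_eq_zero_right huniq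
      rw [this]
    have hsolve : deriv φ t = -(φ t * (Y * φ t)) := by
      calc deriv φ t = (φ t * Am t) * deriv φ t := by
            rw [Matrix.nonsing_inv_mul _ (hdet t ht), one_mul]
        _ = φ t * (Am t * deriv φ t) := by rw [mul_assoc]
        _ = -(φ t * (Y * φ t)) := by rw [h2, mul_neg]
    rw [← hsolve]; exact hd
  have h0ε : |(0:ℝ)| < ε := by simpa using hε
  have hφ0 : φ 0 = D := by
    have hA0 : Am 0 = Ed := by simp [hAm]
    rw [hφdef]
    simp only [hA0]
    exact Matrix.inv_eq_right_inv hED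
  have hψ0 : -(φ 0 * (Y * φ 0)) = X := by
    rw [hφ0, hY]
    simp only [neg_mul, mul_neg, neg_neg, mul_assoc]
    rw [hED, mul_one, ← mul_assoc D Ed, hDE, one_mul]
  have hφder0 : HasDerivAt φ X 0 := by
    have h := hφder 0 h0ε
    rwa [hψ0] at h
  set Z : Mat n := X * (Ed * X) with hZ
  have hψder : HasDerivAt (fun t => -(φ t * (Y * φ t))) (Z + Z) 0 := by
    have hYφ : HasDerivAt (fun t => Y * φ t) (Y * X) 0 := by
      have h := (hasDerivAt_const (0:ℝ) Y).matmul hφder0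
      simpa using h
    have hprod : HasDerivAt (fun t => φ t * (Y * φ t))
        (X * (Y * φ 0) + φ 0 * (Y * X)) 0 := hφder0.matmul hYφ
    have heq : -(X * (Y * φ 0) + φ 0 * (Y * X)) = Z + Z := by
      rw [hφ0, hY, hZ]
      simp only [neg_mul, mul_neg, neg_neg, neg_add, mul_assoc]
      rw [hED, mul_one, ← mul_assoc D Ed, hDE, one_mul]
    rw [← heq]
    exact hprod.neg
  have hFdiff : Differentiable ℝ F := hF.differentiable (by norm_num)
  have hfd1 : ContDiff ℝ 1 (fderiv ℝ F) := hF.fderiv_right (m := 1) (by norm_num)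
  set T := fderiv ℝ (fderiv ℝ F) D with hT
  have hTder : HasFDerivAt (fderiv ℝ F) T (φ 0) := by
    rw [hφ0]
    exact (hfd1.differentiable one_ne_zero D).hasFDerivAt
  have hc : HasDerivAt (fun t => fderiv ℝ F (φ t)) (T X) 0 :=
    hTder.comp_hasDerivAt 0 hφder0
  set g1 : ℝ → ℝ := fun t => fderiv ℝ F (φ t) (-(φ t * (Y * φ t))) with hg1def
  have hg1der : HasDerivAt g1 (T X X + fderiv ℝ F D (Z + Z)) 0 := by
    have h : HasDerivAt g1
        (T X (-(φ 0 * (Y * φ 0))) + (fderiv ℝ F (φ 0)) (Z + Z)) 0 := hc.clm_apply hψder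
    rwa [hψ0, hφ0] at h
  set g : ℝ → ℝ := fun t => F ((Am t)⁻¹) with hgdef
  have hgder : ∀ t : ℝ, |t| < ε → HasDerivAt g (g1 t) t := fun t ht =>
    (hFdiff (φ t)).hasFDerivAt.comp_hasDerivAt t (hφder t ht)
  have hgconv : ConvexOn ℝ (Set.Ioo (-ε) ε) g := by
    have hline : ∀ t : ℝ, (AffineMap.lineMap Ed (Ed + Y) : ℝ →ᵃ[ℝ] Mat n) t = Am t := by
      intro t
      simp [AffineMap.lineMap_apply, hAm]
      abel
    have haff := hconv.comp_affineMap (AffineMap.lineMap Ed (Ed + Y) : ℝ →ᵃ[ℝ] Mat n)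
    have hsub : Set.Ioo (-ε) ε ⊆ (AffineMap.lineMap Ed (Ed + Y) : ℝ →ᵃ[ℝ] Mat n) ⁻¹'
        {A : Matrix (Fin n) (Fin n) ℝ | A.IsSymm ∧ A.PosDef} := by
      intro t ht
      simp only [Set.mem_preimage, hline, Set.mem_setOf_eq]
      exact hmem' t (abs_lt.mpr ⟨ht.1, ht.2⟩)
    have h := haff.subset hsub (convex_Ioo _ _)
    have hfeq : ((fun A => F A⁻¹) ∘ (AffineMap.lineMap Ed (Ed + Y) : ℝ →ᵃ[ℝ] Mat n)) = g := by
      funext t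
      simp only [Function.comp_apply, hline, hgdef]
    rwa [hfeq] at h
  have h0mem : (0:ℝ) ∈ Set.Ioo (-ε) ε := ⟨neg_lt_zero.mpr hε, hε⟩
  have hmono : MonotoneOn (deriv g) (Set.Ioo (-ε) ε) :=
    hgconv.monotoneOn_deriv (fun t ht =>
      (hgder t (abs_lt.mpr ⟨ht.1, ht.2⟩)).differentiableAt)
  have hderiv_eq : ∀ t ∈ Set.Ioo (-ε) ε, deriv g t = g1 t := fun t ht =>
    (hgder t (abs_lt.mpr ⟨ht.1, ht.2⟩)).deriv
  have hq : 0 ≤ T X X + fderiv ℝ F D (Z + Z) := by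
    have htend : Filter.Tendsto (slope g1 0) (nhdsWithin 0 {(0:ℝ)}ᶜ)
        (nhds (T X X + fderiv ℝ F D (Z + Z))) := hasDerivAt_iff_tendsto_slope.1 hg1der
    have htend' : Filter.Tendsto (slope g1 0) (nhdsWithin 0 (Set.Ioi 0))
        (nhds (T X X + fderiv ℝ F D (Z + Z))) :=
      htend.mono_left (nhdsWithin_mono 0 (fun x hx => ne_of_gt hx))
    refine ge_of_tendsto htend' ?_
    filter_upwards [Ioo_mem_nhdsGT_of_mem (Set.left_mem_Ico.mpr hε)] with t ht
    have htmem : t ∈ Set.Ioo (-ε) ε := ⟨by linarith [ht.1, hε], ht.2⟩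
    have h01 : g1 0 ≤ g1 t := by
      have h := hmono h0mem htmem (le_of_lt ht.1)
      rwa [hderiv_eq 0 h0mem, hderiv_eq t htmem] at h
    rw [slope_def_field]
    have htpos : 0 < t - 0 := by linarith [ht.1]
    exact div_nonneg (by linarith) (by linarith)
  -- identify the second-derivative quadratic form
  have hoff : ∀ i k : Fin n, i ≠ k → fderiv ℝ F D (Matrix.single i k 1) = 0 := by
    intro i k h
    rw [hD]
    exact offdiag_deriv_zero F hFdiff horth lam h
  have hsum1 : ∀ (L : Mat n →L[ℝ] ℝ) (M : Mat n),
      L M = ∑ i, ∑ j, M i j * L (Matrix.single i j 1) := by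
    intro L M
    have hMsum : M = ∑ i : Fin n, ∑ j : Fin n, M i j • Matrix.single i j (1:ℝ) := by
      simpa using Matrix.matrix_eq_sum_single M
    conv_lhs => rw [hMsum]
    rw [map_sum]
    refine Finset.sum_congr rfl fun i _ => ?_
    rw [map_sum]
    exact Finset.sum_congr rfl fun j _ => by rw [_root_.map_smul, smul_eq_mul]
  have happ : ∀ W V : Mat n, fderiv ℝ (fun A => fderiv ℝ F A W) D V = T V W := by
    intro W V
    have hcompeq : (fun A : Mat n => fderiv ℝ F A W)
        = (ContinuousLinearMap.apply ℝ ℝ W) ∘ (fderiv ℝ F) := rfl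
    rw [hcompeq]
    have h := (ContinuousLinearMap.apply ℝ ℝ W).hasFDerivAt.comp D
      (hfd1.differentiable one_ne_zero D).hasFDerivAt
    exact (congrArg (fun f => f V) h.fderiv).trans rfl
  have hTXX : (∑ i, ∑ j, ∑ k, ∑ l,
      (fderiv ℝ (fun A => fderiv ℝ F A (Matrix.single k l 1)) D
        (Matrix.single i j 1)) * X i j * X k l) = T X X := by
    have step1 : ∀ i j : Fin n, (∑ k, ∑ l,
        (fderiv ℝ (fun A => fderiv ℝ F A (Matrix.single k l 1)) D
          (Matrix.single i j 1)) * X i j * X k l)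
        = X i j * (T (Matrix.single i j 1) X) := by
      intro i j
      rw [hsum1 (T (Matrix.single i j 1)) X, Finset.mul_sum]
      refine Finset.sum_congr rfl fun k _ => ?_
      rw [Finset.mul_sum]
      refine Finset.sum_congr rfl fun l _ => ?_
      rw [happ]
      ring
    calc (∑ i, ∑ j, ∑ k, ∑ l,
        (fderiv ℝ (fun A => fderiv ℝ F A (Matrix.single k l 1)) D
          (Matrix.single i j 1)) * X i j * X k l)
        = ∑ i, ∑ j, X i j * (T (Matrix.single i j 1) X) :=
          Finset.sum_congr rfl fun i _ => Finset.sum_congr rfl fun j _ => step1 i j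
      _ = T X X := by
          have h := hsum1 ((ContinuousLinearMap.apply ℝ ℝ X).comp T) X
          exact h.symm
  have hdiagF : ∀ M : Mat n, fderiv ℝ F D M
      = ∑ i, M i i * fderiv ℝ F D (Matrix.single i i 1) := by
    intro M
    rw [hsum1 (fderiv ℝ F D) M]
    refine Finset.sum_congr rfl fun i _ => ?_
    rw [Finset.sum_eq_single i]
    · intro j _ hj
      rw [hoff i j (Ne.symm hj), mul_zero]
    · intro h; exact absurd (Finset.mem_univ i) h
  have hZii : ∀ i, Z i i = ∑ j, (lam j)⁻¹ * X i j ^ 2 := by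
    intro i
    rw [hZ, Matrix.mul_apply]
    refine Finset.sum_congr rfl fun j _ => ?_
    rw [hEd, Matrix.diagonal_mul, hX.apply i j]
    ring
  have hRHS : fderiv ℝ F D (Z + Z) = 2 * ∑ i, ∑ j,
      (fderiv ℝ F D (Matrix.single i i 1)) * (lam j)⁻¹ * X i j ^ 2 := by
    have h1 : fderiv ℝ F D Z = ∑ i, ∑ j,
        (fderiv ℝ F D (Matrix.single i i 1)) * (lam j)⁻¹ * X i j ^ 2 := by
      rw [hdiagF Z]
      refine Finset.sum_congr rfl fun i _ => ?_
      rw [hZii i, Finset.sum_mul]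
      exact Finset.sum_congr rfl fun j _ => by ring
    rw [map_add, h1]
    ring
  rw [hTXX, ← hRHS]
  linarith [hq]
end

section
/- Let n ≥ 2, Θ = π/2, n = 3, and m = 1/√3 = tan(π/6). For λ₁, λ₂, λ₃ > −m with λ₁ + λ₂ + λ₃ > 0, set μ_i = (λ_i + m)^{-1}. Then σ₂(λ₁, λ₂, λ₃) = 1 if and only if σ₂(μ)/σ₁(μ) = 1/(2m). -/
open scoped Real
open Real

/-- Three-dimensional Legendre–Lewy identity: with `m = 1/√3`, `λ_i > −m`,
`λ₁+λ₂+λ₃ > 0` and `μ_i = (λ_i + m)⁻¹`, one has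
`σ₂(λ) = 1 ↔ σ₂(μ)/σ₁(μ) = 1/(2m)`. -/
theorem sigma2_iff_Lambda_dim3 (m : ℝ) (hm : m = 1 / Real.sqrt 3)
    (l1 l2 l3 : ℝ) (h1 : -m < l1) (h2 : -m < l2) (h3 : -m < l3)
    (hsum : 0 < l1 + l2 + l3)
    (m1 m2 m3 : ℝ) (hm1 : m1 = (l1 + m)⁻¹) (hm2 : m2 = (l2 + m)⁻¹)
    (hm3 : m3 = (l3 + m)⁻¹) :
    l1 * l2 + l1 * l3 + l2 * l3 = 1 ↔
      (m1 * m2 + m1 * m3 + m2 * m3) / (m1 + m2 + m3) = 1 / (2 * m) := by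
  have hmpos : 0 < m := by
    rw [hm]
    positivity
  have hmsq : m ^ 2 = 1 / 3 := by
    rw [hm, div_pow, one_pow, Real.sq_sqrt (by norm_num : (0:ℝ) ≤ 3)]
  have ha1 : 0 < l1 + m := by linarith
  have ha2 : 0 < l2 + m := by linarith
  have ha3 : 0 < l3 + m := by linarith
  have hs : 0 < m1 + m2 + m3 := by
    rw [hm1, hm2, hm3]; positivity
  rw [div_eq_div_iff hs.ne' (by positivity : (2 * m) ≠ 0)]
  subst hm1 hm2 hm3
  have hP : 0 < (l1 + m) * (l2 + m) * (l3 + m) := by positivity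
  field_simp
  constructor
  · intro h
    linear_combination 3 * hmsq - h
  · intro h
    have key : (l1 * l2 + l1 * l3 + l2 * l3) * (((l1 + m) * (l2 + m) * (l3 + m)) ^ 2)
        = 1 * (((l1 + m) * (l2 + m) * (l3 + m)) ^ 2) := by
      linear_combination (((l1 + m) * (l2 + m) * (l3 + m)) ^ 2) * (3 * hmsq - h)
    have := mul_right_cancel₀ (pow_ne_zero 2 hP.ne') key; linarith
end

section
/- The function (μ₁, μ₂, μ₃) ↦ σ₂(μ)/σ₁(μ) is concave on the positive octant {μ ∈ ℝ³ : μ_i > 0}, and all its partial derivatives are strictly positive there. -/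
open scoped Real
open Real

set_option maxHeartbeats 1000000 in
/-- `σ₂(μ)/σ₁(μ)` is concave on the positive octant of `ℝ³`, with all partial derivatives
strictly positive there. -/
theorem sigma2_div_sigma1_concave :
    ConcaveOn ℝ {μ : Fin 3 → ℝ | ∀ i, 0 < μ i}
      (fun μ => (μ 0 * μ 1 + μ 0 * μ 2 + μ 1 * μ 2) / (μ 0 + μ 1 + μ 2)) ∧
    ∀ μ : Fin 3 → ℝ, (∀ i, 0 < μ i) → ∀ i : Fin 3,
      0 < fderiv ℝ
        (fun ν : Fin 3 → ℝ => (ν 0 * ν 1 + ν 0 * ν 2 + ν 1 * ν 2) / (ν 0 + ν 1 + ν 2)) μ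
        (Pi.single i 1) := by
  constructor
  · constructor
    · intro x hx y hy a b ha hb hab
      intro i
      simp only [Pi.add_apply, Pi.smul_apply, smul_eq_mul]
      rcases eq_or_lt_of_le ha with h | h
      · have hb1 : b = 1 := by linarith
        simp [← h, hb1]; exact hy i
      · nlinarith [hx i, hy i, mul_nonneg hb (le_of_lt (hy i))]
    · intro x hx y hy a b ha hb hab
      simp only [Pi.add_apply, Pi.smul_apply, smul_eq_mul, Set.mem_setOf_eq] at *
      have hs : 0 < x 0 + x 1 + x 2 := by have := hx 0; have := hx 1; have := hx 2; linarith
      have ht : 0 < y 0 + y 1 + y 2 := by have := hy 0; have := hy 1; have := hy 2; linarith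
      have hu : 0 < (a * x 0 + b * y 0) + (a * x 1 + b * y 1) + (a * x 2 + b * y 2) := by
        rcases eq_or_lt_of_le ha with h | h
        · have hb1 : b = 1 := by linarith
          rw [← h, hb1]; simpa using ht
        · nlinarith [hx 0, hx 1, hx 2, mul_nonneg hb (hy 0).le, mul_nonneg hb (hy 1).le,
            mul_nonneg hb (hy 2).le]
      rw [← mul_div_assoc, ← mul_div_assoc, div_add_div _ _ (ne_of_gt hs) (ne_of_gt ht),
        div_le_div_iff₀ (by positivity) hu]
      nlinarith [mul_nonneg (mul_nonneg ha hb) (sq_nonneg (x 0 * (y 0 + y 1 + y 2) - y 0 * (x 0 + x 1 + x 2))),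
        mul_nonneg (mul_nonneg ha hb) (sq_nonneg (x 1 * (y 0 + y 1 + y 2) - y 1 * (x 0 + x 1 + x 2))),
        mul_nonneg (mul_nonneg ha hb) (sq_nonneg (x 2 * (y 0 + y 1 + y 2) - y 2 * (x 0 + x 1 + x 2)))]
  · intro μ hμ i
    have h0' := hμ 0; have h1' := hμ 1; have h2' := hμ 2
    have hs : 0 < μ 0 + μ 1 + μ 2 := by linarith
    set p : Fin 3 → (Fin 3 → ℝ) →L[ℝ] ℝ := fun j => ContinuousLinearMap.proj j with hp
    have h0 : HasFDerivAt (fun ν : Fin 3 → ℝ => ν 0) (p 0) μ := (p 0).hasFDerivAt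
    have h1 : HasFDerivAt (fun ν : Fin 3 → ℝ => ν 1) (p 1) μ := (p 1).hasFDerivAt
    have h2 : HasFDerivAt (fun ν : Fin 3 → ℝ => ν 2) (p 2) μ := (p 2).hasFDerivAt
    have hN : HasFDerivAt (fun ν : Fin 3 → ℝ => ν 0 * ν 1 + ν 0 * ν 2 + ν 1 * ν 2)
        ((μ 0 • p 1 + μ 1 • p 0) + (μ 0 • p 2 + μ 2 • p 0) + (μ 1 • p 2 + μ 2 • p 1)) μ :=
      ((h0.mul h1).add (h0.mul h2)).add (h1.mul h2)
    have hD : HasFDerivAt (fun ν : Fin 3 → ℝ => ν 0 + ν 1 + ν 2) ((p 0 + p 1) + p 2) μ :=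
      (h0.add h1).add h2
    have hInv : HasFDerivAt (fun ν : Fin 3 → ℝ => (ν 0 + ν 1 + ν 2)⁻¹)
        ((-((μ 0 + μ 1 + μ 2) ^ 2)⁻¹) • ((p 0 + p 1) + p 2)) μ :=
      (hasDerivAt_inv hs.ne').comp_hasFDerivAt μ hD
    have hf := hN.mul hInv
    have hfun : (fun ν : Fin 3 → ℝ => (ν 0 * ν 1 + ν 0 * ν 2 + ν 1 * ν 2) / (ν 0 + ν 1 + ν 2))
        = fun ν : Fin 3 → ℝ => (ν 0 * ν 1 + ν 0 * ν 2 + ν 1 * ν 2) * (ν 0 + ν 1 + ν 2)⁻¹ := by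
      funext ν; rw [div_eq_mul_inv]
    rw [hfun, HasFDerivAt.fderiv (f := fun ν : Fin 3 → ℝ => (ν 0 * ν 1 + ν 0 * ν 2 + ν 1 * ν 2) * (ν 0 + ν 1 + ν 2)⁻¹) hf]
    fin_cases i <;>
      simp [hp, Pi.single, Function.update, mul_comm] <;>
    · field_simp
      nlinarith [mul_pos hs (mul_pos h0' h0'), mul_pos hs (mul_pos h1' h1'),
        mul_pos hs (mul_pos h2' h2'), mul_pos hs (mul_pos h0' h1'),
        mul_pos hs (mul_pos h0' h2'), mul_pos hs (mul_pos h1' h2')]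
end
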